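/- arXiv:1907.04572 — 3 statements merged into one kernel-verified Lean document; each statement's English description precedes it below -/
import Mathlib

section
/- Low-temperature limit of the log softmax prior: for a nonempty finite type Z, η : Z → ℝ, and any fixed z ∈ Z, the function σ ↦ σ² · log ( exp (η z / σ²) / Σ_{z'∈Z} exp (η z' / σ²) ) tends to η z − max_{z'∈Z} η z' as σ → 0 from within the positive reals. -/
/-- Low-temperature limit of the log softmax prior:
σ² · log softmax_σ(z) → η z − max η as σ → 0⁺. -/
theorem low_temperature_log_softmax_limit
    {Z : Type*} [Fintype Z] [Nonempty Z] (η : Z → ℝ) (z : Z) :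
    Filter.Tendsto
      (fun σ : ℝ => σ ^ 2 *
        Real.log (Real.exp (η z / σ ^ 2) / ∑ z' : Z, Real.exp (η z' / σ ^ 2)))
      (nhdsWithin 0 (Set.Ioi 0))
      (nhds (η z - Finset.univ.sup' Finset.univ_nonempty η)) := by
  set M := Finset.univ.sup' Finset.univ_nonempty η with hM
  -- algebraic identity on Ioi 0
  have key : ∀ σ ∈ Set.Ioi (0:ℝ),
      σ ^ 2 * Real.log (Real.exp (η z / σ ^ 2) / ∑ z' : Z, Real.exp (η z' / σ ^ 2))
      = η z - M - σ ^ 2 * Real.log (∑ z' : Z, Real.exp ((η z' - M) / σ ^ 2)) := by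
    intro σ hσ
    have hσ0 : (0:ℝ) < σ := hσ
    have hσ2 : (0:ℝ) < σ ^ 2 := by positivity
    have hS : 0 < ∑ z' : Z, Real.exp ((η z' - M) / σ ^ 2) :=
      Finset.sum_pos (fun i _ => Real.exp_pos _) Finset.univ_nonempty
    have hsum : 0 < ∑ z' : Z, Real.exp (η z' / σ ^ 2) :=
      Finset.sum_pos (fun i _ => Real.exp_pos _) Finset.univ_nonempty
    have hfact : (∑ z' : Z, Real.exp (η z' / σ ^ 2))
        = Real.exp (M / σ ^ 2) * ∑ z' : Z, Real.exp ((η z' - M) / σ ^ 2) := by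
      rw [Finset.mul_sum]
      refine Finset.sum_congr rfl fun i _ => ?_
      rw [← Real.exp_add]
      congr 1
      field_simp
      ring
    rw [Real.log_div (Real.exp_ne_zero _) (ne_of_gt hsum), Real.log_exp, hfact,
      Real.log_mul (Real.exp_ne_zero _) (ne_of_gt hS), Real.log_exp]
    field_simp
    ring
  -- squeeze: σ² log S → 0
  have hcard : (0:ℝ) < (Fintype.card Z : ℝ) := by
    exact_mod_cast Fintype.card_pos
  have hlogS_bounds : ∀ σ ∈ Set.Ioi (0:ℝ),
      0 ≤ Real.log (∑ z' : Z, Real.exp ((η z' - M) / σ ^ 2)) ∧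
      Real.log (∑ z' : Z, Real.exp ((η z' - M) / σ ^ 2)) ≤ Real.log (Fintype.card Z) := by
    intro σ hσ
    have hσ0 : (0:ℝ) < σ := hσ
    have hσ2 : (0:ℝ) < σ ^ 2 := by positivity
    obtain ⟨z₀, _, hz₀⟩ := Finset.exists_mem_eq_sup' Finset.univ_nonempty η
    have hS1 : (1:ℝ) ≤ ∑ z' : Z, Real.exp ((η z' - M) / σ ^ 2) := by
      have : Real.exp ((η z₀ - M) / σ ^ 2) = 1 := by
        rw [hM, hz₀]; simp
      calc (1:ℝ) = Real.exp ((η z₀ - M) / σ ^ 2) := this.symm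
        _ ≤ _ := Finset.single_le_sum (f := fun z' => Real.exp ((η z' - M) / σ ^ 2)) (fun i _ => (Real.exp_pos _).le) (Finset.mem_univ z₀)
    have hScard : (∑ z' : Z, Real.exp ((η z' - M) / σ ^ 2)) ≤ Fintype.card Z := by
      calc (∑ z' : Z, Real.exp ((η z' - M) / σ ^ 2)) ≤ ∑ _z' : Z, (1:ℝ) := by
            refine Finset.sum_le_sum fun i _ => ?_
            rw [← Real.exp_zero]
            apply Real.exp_le_exp.mpr
            apply div_nonpos_of_nonpos_of_nonneg _ hσ2.le
            simp only [sub_nonpos, hM]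
            exact Finset.le_sup' η (Finset.mem_univ i)
        _ = Fintype.card Z := by simp
    exact ⟨Real.log_nonneg hS1, Real.log_le_log (by linarith) hScard⟩
  have hsq : Filter.Tendsto (fun σ : ℝ => σ ^ 2 *
      Real.log (∑ z' : Z, Real.exp ((η z' - M) / σ ^ 2)))
      (nhdsWithin 0 (Set.Ioi 0)) (nhds 0) := by
    have hσ2tend : Filter.Tendsto (fun σ : ℝ => σ ^ 2 * Real.log (Fintype.card Z))
        (nhdsWithin 0 (Set.Ioi 0)) (nhds 0) := by
      have : Filter.Tendsto (fun σ : ℝ => σ ^ 2 * Real.log (Fintype.card Z))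
          (nhds 0) (nhds (0 ^ 2 * Real.log (Fintype.card Z))) := by
        exact (Filter.Tendsto.pow Filter.tendsto_id 2).mul_const _
      simpa using this.mono_left nhdsWithin_le_nhds
    refine squeeze_zero' ?_ ?_ hσ2tend
    · filter_upwards [self_mem_nhdsWithin] with σ hσ
      have hσ2 : (0:ℝ) ≤ σ ^ 2 := by positivity
      exact mul_nonneg hσ2 (hlogS_bounds σ hσ).1
    · filter_upwards [self_mem_nhdsWithin] with σ hσ
      have hσ2 : (0:ℝ) ≤ σ ^ 2 := by positivity
      exact mul_le_mul_of_nonneg_left (hlogS_bounds σ hσ).2 hσ2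
  have := (tendsto_const_nhds (x := η z - M)
      (f := nhdsWithin (0:ℝ) (Set.Ioi 0))).sub hsq
  rw [sub_zero] at this
  refine this.congr' ?_
  filter_upwards [self_mem_nhdsWithin] with σ hσ
  exact (key σ hσ).symm
end

section
/- Asymptotic likelihood decomposition (Theorem 2, σ → 0 form): fix x ∈ EuclideanSpace ℝ (Fin n), y ∈ Y and z ∈ Z, and for each σ > 0 let p_σ(x,z,y) denote the NRM joint density with noise parameter σ. Then σ² · ( log p_σ(x,z,y) + (n/2)·log(2·π·σ²) + log K ) tends to −(1/2)·‖x − h y z‖² + (η y z − max_{z'∈Z} η y z') as σ → 0 from within the positive reals: after rescaling by σ², the log joint likelihood asymptotically equals the negative reconstruction loss plus the centered latent score. -/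
open Real Filter

/-- Asymptotic likelihood decomposition (Theorem 2, σ → 0 form): after rescaling by σ²,
the log joint likelihood tends to the negative reconstruction loss plus the centered
latent score. -/
theorem nrm_asymptotic_likelihood_decomposition
    {Y Z : Type*} [Fintype Y] [Nonempty Y] [Fintype Z] [Nonempty Z]
    (n : ℕ) (h : Y → Z → EuclideanSpace ℝ (Fin n)) (η : Y → Z → ℝ)
    (x : EuclideanSpace ℝ (Fin n)) (y : Y) (z : Z)
    (p : ℝ → ℝ)
    (hp : ∀ σ : ℝ, 0 < σ → p σ =
      (1 / (Fintype.card Y : ℝ)) *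
        (Real.exp (η y z / σ ^ 2) / ∑ z' : Z, Real.exp (η y z' / σ ^ 2)) *
        (2 * Real.pi * σ ^ 2) ^ (-(n : ℝ) / 2) *
        Real.exp (-‖x - h y z‖ ^ 2 / (2 * σ ^ 2))) :
    Filter.Tendsto
      (fun σ : ℝ => σ ^ 2 *
        (Real.log (p σ) + ((n : ℝ) / 2) * Real.log (2 * Real.pi * σ ^ 2)
          + Real.log (Fintype.card Y : ℝ)))
      (nhdsWithin 0 (Set.Ioi 0))
      (nhds (-(1 / 2) * ‖x - h y z‖ ^ 2 +
        (η y z - Finset.univ.sup' Finset.univ_nonempty (fun z' => η y z')))) := by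
  set a : Z → ℝ := η y with ha
  set M : ℝ := Finset.univ.sup' Finset.univ_nonempty (fun z' => η y z') with hM
  have hKpos : (0:ℝ) < Fintype.card Y := by
    exact_mod_cast Fintype.card_pos
  have hZpos : (0:ℝ) < Fintype.card Z := by
    exact_mod_cast Fintype.card_pos
  -- key limit: σ² log Σ exp(a z'/σ²) → M
  have key : Tendsto (fun σ : ℝ => σ ^ 2 * Real.log (∑ z' : Z, Real.exp (a z' / σ ^ 2)))
      (nhdsWithin 0 (Set.Ioi 0)) (nhds M) := by
    have hupper : Tendsto (fun σ : ℝ => M + σ ^ 2 * Real.log (Fintype.card Z))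
        (nhdsWithin 0 (Set.Ioi 0)) (nhds M) := by
      have : Tendsto (fun σ : ℝ => M + σ ^ 2 * Real.log (Fintype.card Z))
          (nhds 0) (nhds (M + 0 ^ 2 * Real.log (Fintype.card Z))) := by
        exact (continuous_const.add ((continuous_pow 2).mul continuous_const)).tendsto 0
      simpa using this.mono_left nhdsWithin_le_nhds
    refine tendsto_of_tendsto_of_tendsto_of_le_of_le' tendsto_const_nhds hupper ?_ ?_
    · filter_upwards [self_mem_nhdsWithin] with σ hσ
      have hσ0 : (0:ℝ) < σ := hσ
      have hσ2 : (0:ℝ) < σ ^ 2 := by positivity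
      obtain ⟨z₀, -, hz₀⟩ := Finset.exists_mem_eq_sup' (Finset.univ_nonempty (α := Z))
        (fun z' => η y z')
      have hle : Real.exp (M / σ ^ 2) ≤ ∑ z' : Z, Real.exp (a z' / σ ^ 2) := by
        rw [hM, hz₀]
        exact Finset.single_le_sum (f := fun z' => Real.exp (a z' / σ ^ 2)) (fun i _ => (Real.exp_pos _).le) (Finset.mem_univ z₀)
      have hS : (0:ℝ) < ∑ z' : Z, Real.exp (a z' / σ ^ 2) :=
        Finset.sum_pos (fun i _ => Real.exp_pos _) Finset.univ_nonempty
      exact (div_le_iff₀' hσ2).mp ((Real.le_log_iff_exp_le hS).mpr hle)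
    · filter_upwards [self_mem_nhdsWithin] with σ hσ
      have hσ0 : (0:ℝ) < σ := hσ
      have hσ2 : (0:ℝ) < σ ^ 2 := by positivity
      have hS : (0:ℝ) < ∑ z' : Z, Real.exp (a z' / σ ^ 2) :=
        Finset.sum_pos (fun i _ => Real.exp_pos _) Finset.univ_nonempty
      have hsum : (∑ z' : Z, Real.exp (a z' / σ ^ 2)) ≤
          (Fintype.card Z : ℝ) * Real.exp (M / σ ^ 2) := by
        calc (∑ z' : Z, Real.exp (a z' / σ ^ 2))
            ≤ ∑ _z' : Z, Real.exp (M / σ ^ 2) := by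
              refine Finset.sum_le_sum fun i _ => Real.exp_le_exp.mpr ?_
              exact div_le_div_of_nonneg_right (Finset.le_sup' _ (Finset.mem_univ i)) hσ2.le
          _ = (Fintype.card Z : ℝ) * Real.exp (M / σ ^ 2) := by
              simp [Finset.sum_const, nsmul_eq_mul]
      have hlog : Real.log (∑ z' : Z, Real.exp (a z' / σ ^ 2)) ≤
          Real.log (Fintype.card Z) + M / σ ^ 2 := by
        have := Real.log_le_log hS hsum
        rwa [Real.log_mul hZpos.ne' (Real.exp_pos _).ne', Real.log_exp] at this
      have := mul_le_mul_of_nonneg_left hlog hσ2.le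
      calc σ ^ 2 * Real.log (∑ z' : Z, Real.exp (a z' / σ ^ 2))
          ≤ σ ^ 2 * (Real.log (Fintype.card Z) + M / σ ^ 2) := this
        _ = M + σ ^ 2 * Real.log (Fintype.card Z) := by
            field_simp; ring
  have main : Tendsto
      (fun σ : ℝ => -(1/2) * ‖x - h y z‖ ^ 2 +
        (η y z - σ ^ 2 * Real.log (∑ z' : Z, Real.exp (a z' / σ ^ 2))))
      (nhdsWithin 0 (Set.Ioi 0))
      (nhds (-(1 / 2) * ‖x - h y z‖ ^ 2 + (η y z - M))) :=
    ((tendsto_const_nhds (x := η y z)).sub key).const_add _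
  refine main.congr' ?_
  filter_upwards [self_mem_nhdsWithin] with σ hσ
  have hσpos : (0:ℝ) < σ := hσ
  have hσ2 : (0:ℝ) < σ ^ 2 := by positivity
  have hS : (0:ℝ) < ∑ z' : Z, Real.exp (a z' / σ ^ 2) :=
    Finset.sum_pos (fun i _ => Real.exp_pos _) Finset.univ_nonempty
  have hbase : (0:ℝ) < 2 * Real.pi * σ ^ 2 := by positivity
  rw [hp σ hσpos]
  rw [Real.log_mul (by positivity) (Real.exp_pos _).ne',
      Real.log_mul (by positivity) (Real.rpow_pos_of_pos hbase _).ne',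
      Real.log_mul (by positivity) (by positivity),
      Real.log_div (Real.exp_pos _).ne' hS.ne',
      Real.log_rpow hbase, Real.log_exp, Real.log_exp, Real.log_div one_ne_zero hKpos.ne', Real.log_one]
  show -(1/2) * ‖x - h y z‖ ^ 2 + (η y z - σ ^ 2 * Real.log _) = _
  field_simp
  ring
end

section
/- Optimal latent switches implement ReLU composed with Maxpool: let n ≥ 1 and a : Fin n → ℝ. For every s ∈ ℝ with s ∈ {0,1} and every t : Fin n → ℝ with t j ∈ {0,1} for all j and Σ_j t j = 1, one has s · (Σ_j t j · a j) ≤ max 0 (max_j a j); moreover this bound is attained by some admissible pair (s, t). Hence the maximum of the objective over the rendering switch s and the one-hot translation t equals max 0 (max_j a j) = ReLU(Maxpool(a)). -/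
/-- A one-hot vector selects a single coordinate. -/
lemma onehot_sum_eq (n : ℕ) (a t : Fin n → ℝ) (ht : ∀ j, t j = 0 ∨ t j = 1)
    (hsum : (∑ j, t j) = 1) : ∃ j₀, (∑ j, t j * a j) = a j₀ := by
  have h1 : ∃ j₀, t j₀ = 1 := by
    by_contra h
    push_neg at h
    have : ∀ j ∈ Finset.univ, t j = 0 := fun j _ => (ht j).resolve_right (h j)
    rw [Finset.sum_eq_zero this] at hsum
    norm_num at hsum
  obtain ⟨j₀, hj₀⟩ := h1
  refine ⟨j₀, ?_⟩
  have hz : ∀ j, j ≠ j₀ → t j = 0 := by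
    intro j hj
    by_contra h0
    have hj1 : t j = 1 := (ht j).resolve_left h0
    have hnn : ∀ i ∈ Finset.univ, i ∉ ({j, j₀} : Finset (Fin n)) → 0 ≤ t i := by
      intro i _ _; rcases ht i with h | h <;> simp [h]
    have hle : (∑ i ∈ ({j, j₀} : Finset (Fin n)), t i) ≤ ∑ i, t i :=
      Finset.sum_le_sum_of_subset_of_nonneg (Finset.subset_univ _) hnn
    rw [hsum, Finset.sum_pair hj, hj1, hj₀] at hle
    norm_num at hle
  rw [Finset.sum_eq_single j₀]
  · rw [hj₀, one_mul]
  · intro b _ hb; rw [hz b hb, zero_mul]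
  · intro h; exact absurd (Finset.mem_univ j₀) h

/-- Optimal latent switches implement ReLU composed with Maxpool: over a binary
rendering switch s and a one-hot translation t, the objective is at most
ReLU(Maxpool(a)) and this bound is attained by an admissible pair. -/
theorem switches_implement_relu_maxpool (n : ℕ) (hn : 1 ≤ n) (a : Fin n → ℝ) :
    (∀ s : ℝ, (s = 0 ∨ s = 1) →
      ∀ t : Fin n → ℝ, (∀ j, t j = 0 ∨ t j = 1) → (∑ j, t j) = 1 →
        s * (∑ j, t j * a j) ≤
          max 0 (Finset.univ.sup' ⟨⟨0, hn⟩, Finset.mem_univ _⟩ a)) ∧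
    (∃ s : ℝ, (s = 0 ∨ s = 1) ∧
      ∃ t : Fin n → ℝ, (∀ j, t j = 0 ∨ t j = 1) ∧ (∑ j, t j) = 1 ∧
        s * (∑ j, t j * a j) =
          max 0 (Finset.univ.sup' ⟨⟨0, hn⟩, Finset.mem_univ _⟩ a)) := by
  constructor
  · rintro s (rfl | rfl) t ht hsum
    · simp
    · obtain ⟨j₀, hj₀⟩ := onehot_sum_eq n a t ht hsum
      rw [one_mul, hj₀]
      exact le_max_of_le_right (Finset.le_sup' a (Finset.mem_univ j₀))
  · obtain ⟨j₀, -, hj₀⟩ := Finset.exists_mem_eq_sup' ⟨⟨0, hn⟩, Finset.mem_univ _⟩ a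
    by_cases hpos : 0 ≤ a j₀
    · refine ⟨1, Or.inr rfl, fun j => if j = j₀ then 1 else 0, ?_, ?_, ?_⟩
      · intro j; by_cases h : j = j₀ <;> simp [h]
      · simp
      · rw [one_mul, Finset.sum_eq_single j₀] <;> simp_all
    · refine ⟨0, Or.inl rfl, fun j => if j = j₀ then 1 else 0, ?_, ?_, ?_⟩
      · intro j; by_cases h : j = j₀ <;> simp [h]
      · simp
      · rw [zero_mul, hj₀, max_eq_left (le_of_lt (not_le.mp hpos))]
end
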